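/- arXiv:1510.08564 — 2 statements merged into one kernel-verified Lean document; each statement's English description precedes it below -/
import Mathlib

section
/- Fix natural numbers u and v, and define the multiplication-carry sequence C : ℕ → ℕ by C 0 = Bitsum(0, 0, u, v) / 2 and C (y+1) = (Bitsum(y+1, y+1, u, v) + C y) / 2 (integer division). Then for every y, C y ≤ |u|. -/
/-- The `y`-th least significant binary digit of `x`, as a natural number. -/
def bitOf (x y : ℕ) : ℕ := x / 2 ^ y % 2

/-- `Bitsum x y u v = Σ_{i=0}^{min(x,y)} (u)_i · (v)_{y−i}`. -/
def Bitsum (x y u v : ℕ) : ℕ :=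
  ∑ i ∈ Finset.range (min x y + 1), bitOf u i * bitOf v (y - i)

lemma bitOf_le_one (x y : ℕ) : bitOf x y ≤ 1 :=
  Nat.lt_succ_iff.mp (Nat.mod_lt _ (by norm_num))

lemma bitOf_eq_zero (x y : ℕ) (h : Nat.size x ≤ y) : bitOf x y = 0 := by
  have : x < 2 ^ y := lt_of_lt_of_le (Nat.lt_size_self x)
    (Nat.pow_le_pow_right (by norm_num) h)
  simp [bitOf, Nat.div_eq_of_lt this]

lemma sum_bits_le (u n : ℕ) : ∑ i ∈ Finset.range n, bitOf u i ≤ Nat.size u := by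
  calc ∑ i ∈ Finset.range n, bitOf u i
      ≤ ∑ i ∈ Finset.range n, (if i < Nat.size u then 1 else 0) := by
        apply Finset.sum_le_sum
        intro i _
        by_cases h : i < Nat.size u
        · simpa [h] using bitOf_le_one u i
        · simp [h, bitOf_eq_zero u i (le_of_not_gt h)]
    _ = ((Finset.range n).filter (· < Nat.size u)).card := by
        simp [Finset.sum_ite, Finset.sum_const]
    _ ≤ Nat.size u := by
        have : (Finset.range n).filter (· < Nat.size u) ⊆ Finset.range (Nat.size u) := by
          intro i hi
          simp only [Finset.mem_filter, Finset.mem_range] at hi ⊢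
          exact hi.2
        simpa using Finset.card_le_card this

lemma bitsum_le (y u v : ℕ) : Bitsum y y u v ≤ Nat.size u := by
  calc Bitsum y y u v ≤ ∑ i ∈ Finset.range (min y y + 1), bitOf u i := by
        apply Finset.sum_le_sum
        intro i _
        simpa using Nat.mul_le_mul_left (bitOf u i) (bitOf_le_one v (y - i))
    _ ≤ Nat.size u := sum_bits_le u _

theorem stmt_9 (u v : ℕ) (C : ℕ → ℕ)
    (hC0 : C 0 = Bitsum 0 0 u v / 2)
    (hCs : ∀ y, C (y + 1) = (Bitsum (y + 1) (y + 1) u v + C y) / 2) :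
    ∀ y, C y ≤ Nat.size u := by
  intro y
  induction y with
  | zero =>
      rw [hC0]
      exact le_trans (Nat.div_le_self _ _) (bitsum_le 0 u v)
  | succ n ih =>
      rw [hCs]
      have h1 : Bitsum (n + 1) (n + 1) u v + C n ≤ Nat.size u + Nat.size u :=
        Nat.add_le_add (bitsum_le (n + 1) u v) ih
      calc (Bitsum (n + 1) (n + 1) u v + C n) / 2 ≤ (Nat.size u + Nat.size u) / 2 :=
            Nat.div_le_div_right h1
        _ = Nat.size u := by omega
end

section
/- Fix natural numbers u and v, and define the multiplication-carry sequence C : ℕ → ℕ by C 0 = Bitsum(0, 0, u, v) / 2 and C (y+1) = (Bitsum(y+1, y+1, u, v) + C y) / 2 (integer division). Then: Nat.testBit (u·v) 0 = decide (Bitsum(0, 0, u, v) % 2 = 1), and for every y, Nat.testBit (u·v) (y+1) = decide ((Bitsum(y+1, y+1, u, v) + C y) % 2 = 1). -/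
/-!
Write `S k = Bitsum k k u v` for the `k`-th column of the schoolbook multiplication table and
`P n = ∑_{k<n} S k 2^k`. Expanding `u % 2^n` in binary, the term `(u)_i 2^i v` matters modulo
`2^n` only through `v % 2^(n-i)`; expanding that too and regrouping by columns gives
`u * v ≡ P n [MOD 2^n]`. So bit `n` of `u * v` is bit `n` of `P (n + 1) = P n + S n 2^n`, i.e. the
parity of `S n + P n / 2^n`, and the carry recursion says that `C n = P (n + 1) / 2^(n + 1)`.
-/

open Finset

lemma mod_two_pow_eq_sum_bitOf (x n : ℕ) :
    x % 2 ^ n = ∑ i ∈ range n, bitOf x i * 2 ^ i := by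
  induction n with
  | zero => simp [Nat.mod_one]
  | succ n ih => rw [sum_range_succ, ← ih, Nat.mod_pow_succ, bitOf, mul_comm (2 ^ n)]

lemma sum_bitsum_mul_two_pow (u v n : ℕ) :
    ∑ k ∈ range n, Bitsum k k u v * 2 ^ k =
      ∑ i ∈ range n, bitOf u i * 2 ^ i * (v % 2 ^ (n - i)) := by
  calc ∑ k ∈ range n, Bitsum k k u v * 2 ^ k
      = ∑ k ∈ range n, ∑ i ∈ range (k + 1),
          bitOf u i * 2 ^ i * (bitOf v (k - i) * 2 ^ (k - i)) := by
        refine sum_congr rfl fun k _ => ?_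
        rw [Bitsum, min_self, sum_mul]
        refine sum_congr rfl fun i hi => ?_
        rw [← Nat.pow_sub_mul_pow 2 (Nat.le_of_lt_succ (mem_range.mp hi))]
        ring
    _ = ∑ i ∈ range n, ∑ j ∈ range (n - i), bitOf u i * 2 ^ i * (bitOf v j * 2 ^ j) :=
        sum_range_diag_flip n fun i j => bitOf u i * 2 ^ i * (bitOf v j * 2 ^ j)
    _ = ∑ i ∈ range n, bitOf u i * 2 ^ i * (v % 2 ^ (n - i)) := by
        simp only [← mul_sum, mod_two_pow_eq_sum_bitOf]

lemma mul_modEq_sum_bitsum_mul_two_pow (u v n : ℕ) :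
    u * v ≡ ∑ k ∈ range n, Bitsum k k u v * 2 ^ k [MOD 2 ^ n] := by
  rw [sum_bitsum_mul_two_pow]
  have hterm : ∀ i ∈ range n,
      bitOf u i * 2 ^ i * v ≡ bitOf u i * 2 ^ i * (v % 2 ^ (n - i)) [MOD 2 ^ n] := by
    intro i hi
    have h := ((Nat.mod_modEq v (2 ^ (n - i))).symm.mul_left' (2 ^ i)).mul_left (bitOf u i)
    rw [← pow_add, Nat.add_sub_cancel' (mem_range.mp hi).le] at h
    simpa only [mul_assoc] using h
  calc u * v ≡ u % 2 ^ n * v [MOD 2 ^ n] := ((Nat.mod_modEq u _).mul_right v).symm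
    _ = ∑ i ∈ range n, bitOf u i * 2 ^ i * v := by rw [mod_two_pow_eq_sum_bitOf, sum_mul]
    _ ≡ _ [MOD 2 ^ n] := Nat.ModEq.sum hterm

lemma Nat.testBit_eq_of_modEq_two_pow {a b n i : ℕ} (h : a ≡ b [MOD 2 ^ n]) (hi : i < n) :
    a.testBit i = b.testBit i := by
  have h' := congrArg (fun x => x.testBit i) h
  simpa only [Nat.testBit_mod_two_pow, hi, decide_true, Bool.true_and] using h'

section Carries

variable (S : ℕ → ℕ)

lemma testBit_sum_range_succ_mul_two_pow (n : ℕ) :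
    (∑ k ∈ range (n + 1), S k * 2 ^ k).testBit n =
      decide ((S n + (∑ k ∈ range n, S k * 2 ^ k) / 2 ^ n) % 2 = 1) := by
  rw [Nat.testBit_eq_decide_div_mod_eq, sum_range_succ,
    Nat.add_mul_div_right _ _ (Nat.two_pow_pos n), add_comm]

lemma carry_eq_sum_div_two_pow (C : ℕ → ℕ) (hC0 : C 0 = S 0 / 2)
    (hCs : ∀ y, C (y + 1) = (S (y + 1) + C y) / 2) (n : ℕ) :
    C n = (∑ k ∈ range (n + 1), S k * 2 ^ k) / 2 ^ (n + 1) := by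
  induction n with
  | zero => simp [hC0]
  | succ n ih =>
    rw [hCs, ih, sum_range_succ _ (n + 1), pow_succ 2 (n + 1), ← Nat.div_div_eq_div_mul,
      Nat.add_mul_div_right _ _ (Nat.two_pow_pos _), add_comm]

end Carries

theorem stmt_10 (u v : ℕ) (C : ℕ → ℕ)
    (hC0 : C 0 = Bitsum 0 0 u v / 2)
    (hCs : ∀ y, C (y + 1) = (Bitsum (y + 1) (y + 1) u v + C y) / 2) :
    Nat.testBit (u * v) 0 = decide (Bitsum 0 0 u v % 2 = 1) ∧
    ∀ y, Nat.testBit (u * v) (y + 1) =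
      decide ((Bitsum (y + 1) (y + 1) u v + C y) % 2 = 1) := by
  set S : ℕ → ℕ := fun k => Bitsum k k u v
  have hbit : ∀ n, (u * v).testBit n =
      decide ((S n + (∑ k ∈ range n, S k * 2 ^ k) / 2 ^ n) % 2 = 1) := fun n => by
    rw [Nat.testBit_eq_of_modEq_two_pow (mul_modEq_sum_bitsum_mul_two_pow u v (n + 1))
      n.lt_succ_self, testBit_sum_range_succ_mul_two_pow]
  refine ⟨by simpa using hbit 0, fun y => ?_⟩
  rw [hbit, carry_eq_sum_div_two_pow S C hC0 hCs y]
end
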